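/- Let m ≥ 2 be an integer and β ∈ ℝ. Then there exist n ∈ ℕ and c > 0 such that for all t ∈ ℝ: |Σ_{k=1}^{m} binom(m,k) (-1)^{m-k} k^{-β} (log k)^n e^{-it log k}| ≥ c. In particular, n can be chosen so large that m^{-β} (log m)^n > Σ_{k=2}^{m-1} binom(m,k) k^{-β} (log k)^n. -/

import Mathlib

/-!
The term `k = m` has modulus `m^(-β) (log m)^n`, the term `k = 1` vanishes, and every other
term has modulus `(m choose k) k^(-β) (log k)^n` with `0 ≤ log k < log m`. Dividing by
`(log m)^n`, the middle terms tend to `0` as `n → ∞`, so for large `n` the top term dominates the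
sum of the moduli of all the others, uniformly in `t`.
-/

open Filter Finset

lemma eventually_sum_mul_pow_lt {ι : Type*} (s : Finset ι) (w x : ι → ℝ) {X c : ℝ}
    (hX : 0 < X) (hc : 0 < c) (hx : ∀ i ∈ s, |x i| < X) :
    ∀ᶠ n : ℕ in atTop, ∑ i ∈ s, w i * x i ^ n < c * X ^ n := by
  have hlim : Tendsto (fun n : ℕ => ∑ i ∈ s, w i * (x i / X) ^ n) atTop (nhds 0) := by
    rw [← sum_const_zero (s := s)]
    refine tendsto_finsetSum s fun i hi => ?_
    simpa using (tendsto_pow_atTop_nhds_zero_of_abs_lt_one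
      (by rw [abs_div, abs_of_pos hX, div_lt_one hX]; exact hx i hi)).const_mul (w i)
  filter_upwards [hlim.eventually (gt_mem_nhds hc)] with n hn
  have hXn : 0 < X ^ n := pow_pos hX n
  calc ∑ i ∈ s, w i * x i ^ n = (∑ i ∈ s, w i * (x i / X) ^ n) * X ^ n := by
        rw [sum_mul]
        refine sum_congr rfl fun i _ => ?_
        rw [div_pow, mul_assoc, div_mul_cancel₀ _ hXn.ne']
    _ < c * X ^ n := mul_lt_mul_of_pos_right hn hXn

lemma norm_sub_sum_norm_le_norm_add_sum {ι E : Type*} [SeminormedAddCommGroup E]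
    (s : Finset ι) (a : E) (z : ι → E) :
    ‖a‖ - ∑ i ∈ s, ‖z i‖ ≤ ‖a + ∑ i ∈ s, z i‖ :=
  calc ‖a‖ - ∑ i ∈ s, ‖z i‖ ≤ ‖a‖ - ‖-∑ i ∈ s, z i‖ := by
        rw [norm_neg]; exact sub_le_sub_left (norm_sum_le s z) _
    _ ≤ ‖a + ∑ i ∈ s, z i‖ := by simpa using norm_sub_norm_le a (-∑ i ∈ s, z i)

lemma sum_Icc_one_eq_add_sum_Icc_two {M : Type*} [AddCommMonoid M] {m : ℕ} (hm : 2 ≤ m)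
    (f : ℕ → M) (hf : f 1 = 0) :
    ∑ k ∈ Finset.Icc 1 m, f k = f m + ∑ k ∈ Finset.Icc 2 (m - 1), f k := by
  have hsplit : Finset.Icc 1 m = insert 1 (insert m (Finset.Icc 2 (m - 1))) := by
    ext k
    simp only [Finset.mem_Icc, Finset.mem_insert]
    omega
  rw [hsplit, sum_insert (by simp only [Finset.mem_insert, Finset.mem_Icc]; omega),
    sum_insert (by simp only [Finset.mem_Icc]; omega), hf, zero_add]

noncomputable def binomialLogTerm (m n : ℕ) (β t : ℝ) (k : ℕ) : ℂ :=
  (m.choose k : ℂ) * (-1) ^ (m - k) * (((k : ℝ) ^ (-β) * Real.log k ^ n : ℝ) : ℂ) *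
    Complex.exp (-(t : ℂ) * (Real.log k : ℂ) * Complex.I)

lemma norm_binomialLogTerm (m n : ℕ) (β t : ℝ) (k : ℕ) :
    ‖binomialLogTerm m n β t k‖ = m.choose k * (k : ℝ) ^ (-β) * Real.log k ^ n := by
  have hweight : 0 ≤ (k : ℝ) ^ (-β) * Real.log k ^ n :=
    mul_nonneg (Real.rpow_nonneg k.cast_nonneg _) (pow_nonneg (Real.log_natCast_nonneg k) _)
  have hphase : -(t : ℂ) * (Real.log k : ℂ) * Complex.I
      = ((-(t * Real.log k) : ℝ) : ℂ) * Complex.I := by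
    push_cast; ring
  rw [binomialLogTerm, norm_mul, norm_mul, norm_mul, hphase, Complex.norm_exp_ofReal_mul_I,
    Complex.norm_real, Real.norm_of_nonneg hweight, norm_pow, norm_neg, norm_one, one_pow,
    Complex.norm_natCast, mul_one, mul_one, mul_assoc]

lemma binomialLogTerm_one (m : ℕ) {n : ℕ} (hn : n ≠ 0) (β t : ℝ) :
    binomialLogTerm m n β t 1 = 0 := by
  simp [binomialLogTerm, zero_pow hn]

theorem stmt_6 (m : ℕ) (hm : 2 ≤ m) (β : ℝ) :
    ∃ (n : ℕ) (c : ℝ), 0 < c ∧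
      (∀ t : ℝ, c ≤ ‖(∑ k ∈ Finset.Icc 1 m,
        (m.choose k : ℂ) * (-1) ^ (m - k) * (((k : ℝ) ^ (-β) * Real.log k ^ n : ℝ) : ℂ) *
          Complex.exp (-(t : ℂ) * (Real.log k : ℂ) * Complex.I))‖) ∧
      (∑ k ∈ Finset.Icc 2 (m - 1), (m.choose k : ℝ) * (k : ℝ) ^ (-β) * Real.log k ^ n
        < (m : ℝ) ^ (-β) * Real.log m ^ n) := by
  have hm_pos : (0 : ℝ) < m := by exact_mod_cast (by omega : 0 < m)
  have hlog_lt : ∀ k ∈ Finset.Icc 2 (m - 1), |Real.log k| < Real.log m := fun k hk => by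
    rw [Finset.mem_Icc] at hk
    rw [abs_of_nonneg (Real.log_natCast_nonneg k)]
    exact Real.log_lt_log (by exact_mod_cast (by omega : 0 < k)) (by exact_mod_cast (by omega))
  have hlog_m : 0 < Real.log m := Real.log_pos (by exact_mod_cast (by omega : 1 < m))
  obtain ⟨n, hdom, hn⟩ := ((eventually_sum_mul_pow_lt (Finset.Icc 2 (m - 1))
    (fun k => m.choose k * (k : ℝ) ^ (-β)) (fun k => Real.log k) hlog_m
    (Real.rpow_pos_of_pos hm_pos (-β)) hlog_lt).and (eventually_ge_atTop 1)).exists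
  refine ⟨n, _, sub_pos.2 hdom, fun t => ?_, hdom⟩
  change _ ≤ ‖∑ k ∈ Finset.Icc 1 m, binomialLogTerm m n β t k‖
  rw [sum_Icc_one_eq_add_sum_Icc_two hm _ (binomialLogTerm_one m (by omega) β t)]
  convert norm_sub_sum_norm_le_norm_add_sum _ _ _ using 2
  · simp [norm_binomialLogTerm]
  · simp only [norm_binomialLogTerm]
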